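/- For the logistic loss ℓ(z) = ln(1+e^z) and ψ(ξ) = ℓ^{-1}(∑_i ℓ(ξ_i)), for any ξ ∈ ℝⁿ the gradient ∇ψ(ξ) with coordinates ℓ'(ξ_i)/ℓ'(ψ(ξ)) satisfies ‖∇ψ(ξ)‖₁ ≥ 1. -/

import Mathlib

/-!
Write `Lᵢ = ℓ(ξᵢ) > 0`. Since `ℓ'(ℓ⁻¹(s)) = 1 - e^{-s}`, the coordinates of `∇ψ(ξ)` are
`(1 - e^{-Lᵢ}) / (1 - e^{-∑ⱼ Lⱼ})`, which are nonnegative, so the ℓ₁ norm is the plain sum.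
It is at least 1 because `s ↦ 1 - e^{-s}` is subadditive on `[0, ∞)`:
`(1 - e^{-a}) + (1 - e^{-b}) - (1 - e^{-(a+b)}) = (1 - e^{-a}) (1 - e^{-b}) ≥ 0`.
-/

open Real Finset

lemma one_sub_exp_neg_nonneg {s : ℝ} (hs : 0 ≤ s) : 0 ≤ 1 - exp (-s) := by
  linarith [exp_le_one_iff.mpr (neg_nonpos.mpr hs)]

lemma one_sub_exp_neg_add_le {a b : ℝ} (ha : 0 ≤ a) (hb : 0 ≤ b) :
    1 - exp (-(a + b)) ≤ (1 - exp (-a)) + (1 - exp (-b)) := by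
  have hprod := mul_nonneg (one_sub_exp_neg_nonneg ha) (one_sub_exp_neg_nonneg hb)
  rw [neg_add, exp_add]
  linarith

lemma one_sub_exp_neg_sum_le {ι : Type*} (s : Finset ι) {L : ι → ℝ} (hL : ∀ i ∈ s, 0 ≤ L i) :
    1 - exp (-∑ i ∈ s, L i) ≤ ∑ i ∈ s, (1 - exp (-L i)) :=
  le_sum_of_subadditive_on_pred (fun x => 1 - exp (-x)) (0 ≤ ·) (by simp)
    (fun _ _ => one_sub_exp_neg_add_le) (fun _ _ => add_nonneg) L hL

lemma log_one_add_exp_pos (x : ℝ) : 0 < log (1 + exp x) :=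
  log_pos (lt_add_of_pos_right 1 (exp_pos x))

/-- For the logistic loss `ℓ(z) = ln(1+e^z)` and `ψ(ξ) = ℓ⁻¹(∑ᵢ ℓ(ξᵢ))`,
for any `ξ` the gradient `∇ψ(ξ)`, with coordinates
`(1 − e^{−ℓ(ξᵢ)}) / (1 − e^{−∑ⱼ ℓ(ξⱼ)})`, has ℓ₁ norm at least 1. -/
theorem stmt_5 {n : ℕ} (hn : 0 < n) (ξ : Fin n → ℝ)
    (q : Fin n → ℝ)
    (hq : ∀ i, q i = (1 - Real.exp (-(Real.log (1 + Real.exp (ξ i))))) /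
        (1 - Real.exp (-(∑ j, Real.log (1 + Real.exp (ξ j)))))) :
    1 ≤ ∑ i, |q i| := by
  set L : Fin n → ℝ := fun i => log (1 + exp (ξ i))
  have hL (i : Fin n) : 0 < L i := log_one_add_exp_pos (ξ i)
  have hden : 0 < 1 - exp (-∑ j, L j) := by
    have : Nonempty (Fin n) := ⟨⟨0, hn⟩⟩
    linarith [exp_lt_one_iff.mpr (neg_lt_zero.mpr (sum_pos (fun i _ => hL i) univ_nonempty))]
  have hq_nonneg (i : Fin n) : 0 ≤ q i :=
    hq i ▸ div_nonneg (one_sub_exp_neg_nonneg (hL i).le) hden.le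
  calc 1 ≤ (∑ i, (1 - exp (-L i))) / (1 - exp (-∑ j, L j)) := by
        rw [le_div_iff₀ hden, one_mul]
        exact one_sub_exp_neg_sum_le univ fun i _ => (hL i).le
    _ = ∑ i, |q i| := by
        rw [sum_div]
        exact sum_congr rfl fun i _ => by rw [abs_of_nonneg (hq_nonneg i), hq i]
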